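/- Let $X$ be a separable metric space and $f : X \to \mathcal{K}^n$ a map into the space of convex bodies with the Hausdorff metric, such that for every unit vector $u$ and every $\lambda \in \mathbb{R}$ the set $\{x \in X : h_{f(x)}(u) \ge \lambda\}$ is closed. Then $f$ is Borel measurable. -/

import Mathlib

open scoped Pointwise RealInnerProductSpace
open MeasureTheory

noncomputable section

/-- Support function of a convex body. -/
def sfn {n : ℕ} (K : ConvexBody (EuclideanSpace ℝ (Fin n))) (u : EuclideanSpace ℝ (Fin n)) : ℝ :=
  sSup ((fun x => ⟪x, u⟫) '' (K : Set (EuclideanSpace ℝ (Fin n))))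

/-! The support functions on a countable dense subset of the unit sphere determine the Hausdorff
distance between two convex bodies, so `x ↦ dist (f x) K` is measurable for every `K`; as the space of
convex bodies is separable, this forces `f` to be measurable. That the support functions see the whole
Hausdorff distance is a separation argument: if `x ∈ K` is farther than `r` from its nearest point
`y ∈ L`, then in the direction `x - y` the support function of `K` exceeds that of `L` by more
than `r`. -/

open Metric Set TopologicalSpace

theorem measurable_of_measurable_dist {α Y : Type*} [MeasurableSpace α] [PseudoMetricSpace Y]
    [SecondCountableTopology Y] [MeasurableSpace Y] [BorelSpace Y] {f : α → Y}
    (hf : ∀ y, Measurable fun x => dist (f x) y) : Measurable f := by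
  refine measurable_of_isOpen fun s hs => ?_
  choose! ε hε hεs using Metric.isOpen_iff.1 hs
  obtain ⟨T, hTc, hT⟩ :=
    isOpen_iUnion_countable (fun y : s => ball (y : Y) (ε y)) fun _ => isOpen_ball
  have hs_eq : s = ⋃ y ∈ T, ball (y : Y) (ε y) := by
    rw [hT]
    refine Subset.antisymm (fun y hy => mem_iUnion.2 ⟨⟨y, hy⟩, mem_ball_self (hε y hy)⟩) ?_
    exact iUnion_subset fun y => hεs y y.2
  rw [hs_eq, preimage_iUnion₂]
  exact .biUnion hTc fun y _ => hf y measurableSet_Iio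

namespace ConvexBody

variable {V : Type*} [NormedAddCommGroup V] [NormedSpace ℝ V]

theorem exists_dist_le_dist {K L : ConvexBody V} {x : V} (hx : x ∈ K) :
    ∃ y ∈ L, dist x y ≤ dist K L := by
  obtain ⟨y, hy, hxy⟩ := L.isCompact.exists_infDist_eq_dist L.nonempty x
  refine ⟨y, hy, hxy ▸ ?_⟩
  rw [← hausdorffDist_coe]
  exact infDist_le_hausdorffDist_of_mem hx hausdorffEDist_ne_top

instance [SecondCountableTopology V] : SecondCountableTopology (ConvexBody V) :=
  let toNonemptyCompacts : ConvexBody V → NonemptyCompacts V :=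
    fun K => ⟨⟨K, K.isCompact⟩, K.nonempty⟩
  have : Isometry toNonemptyCompacts := .of_dist_eq fun _ _ => NonemptyCompacts.dist_eq
  this.isEmbedding.secondCountableTopology

end ConvexBody

section SupportFunction

variable {n : ℕ}

local notation "E" => EuclideanSpace ℝ (Fin n)

theorem inner_le_sfn (K : ConvexBody E) (u : E) {x : E} (hx : x ∈ K) : ⟪x, u⟫ ≤ sfn K u :=
  le_csSup (K.isCompact.image (continuous_id.inner continuous_const)).bddAbove ⟨x, hx, rfl⟩

theorem sfn_le {K : ConvexBody E} {u : E} {c : ℝ} (hc : ∀ x ∈ K, ⟪x, u⟫ ≤ c) :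
    sfn K u ≤ c :=
  csSup_le (K.nonempty.image _) (forall_mem_image.2 hc)

theorem continuous_sfn (K : ConvexBody E) : Continuous (sfn K) :=
  K.isCompact.continuous_sSup (f := fun u x => ⟪x, u⟫) (continuous_snd.inner continuous_fst)

theorem sfn_le_sfn_add_dist (K L : ConvexBody E) {u : E} (hu : ‖u‖ = 1) :
    sfn K u ≤ sfn L u + dist K L := by
  refine sfn_le fun x hx => ?_
  obtain ⟨y, hy, hxy⟩ := ConvexBody.exists_dist_le_dist (L := L) hx
  have hxy_u : ⟪x - y, u⟫ ≤ dist K L :=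
    calc ⟪x - y, u⟫ ≤ ‖x - y‖ * ‖u‖ := real_inner_le_norm _ _
      _ ≤ dist K L := by rwa [hu, mul_one, ← dist_eq_norm]
  rw [inner_sub_left] at hxy_u
  linarith [inner_le_sfn L u hy]

theorem exists_dist_le_of_forall_sfn_le {K L : ConvexBody E} {r : ℝ} (hr : 0 ≤ r)
    (h : ∀ u : E, ‖u‖ = 1 → sfn K u ≤ sfn L u + r) {x : E} (hx : x ∈ K) :
    ∃ y ∈ L, dist x y ≤ r := by
  obtain ⟨y, hyL, hy⟩ :=
    exists_norm_eq_iInf_of_complete_convex L.nonempty L.isCompact.isComplete L.convex x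
  refine ⟨y, hyL, ?_⟩
  rw [dist_eq_norm]
  by_contra! hlt
  have hne : x - y ≠ 0 := norm_pos_iff.1 (hr.trans_lt hlt)
  set u : E := ‖x - y‖⁻¹ • (x - y)
  have hu : ‖u‖ = 1 := norm_smul_inv_norm hne
  have hL : sfn L u ≤ ⟪y, u⟫ := sfn_le fun a ha => by
    have hay := (norm_eq_iInf_iff_real_inner_le_zero L.convex hyL).1 hy a ha
    have : ⟪a - y, u⟫ ≤ 0 := by
      rw [real_inner_smul_right, real_inner_comm]
      exact mul_nonpos_of_nonneg_of_nonpos (inv_nonneg.2 (norm_nonneg _)) hay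
    rw [inner_sub_left] at this
    linarith
  have hx_u : ⟪x, u⟫ = ⟪y, u⟫ + ‖x - y‖ := by
    have : ⟪x - y, u⟫ = ‖x - y‖ := by
      rw [real_inner_smul_right, real_inner_self_eq_norm_sq, pow_two, inv_mul_cancel_left₀]
      exact norm_ne_zero_iff.2 hne
    rw [inner_sub_left] at this
    linarith
  linarith [h u hu, inner_le_sfn K u hx]

theorem dist_le_iff_forall_abs_sfn_sub_le {K L : ConvexBody E} {r : ℝ} (hr : 0 ≤ r) :
    dist K L ≤ r ↔ ∀ u : E, ‖u‖ = 1 → |sfn K u - sfn L u| ≤ r := by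
  constructor
  · intro hd u hu
    refine abs_sub_le_iff.2 ⟨?_, ?_⟩
    · linarith [sfn_le_sfn_add_dist K L hu]
    · linarith [sfn_le_sfn_add_dist L K hu, dist_comm K L]
  · intro h
    refine hausdorffDist_le_of_mem_dist hr (fun x hx => ?_) (fun x hx => ?_)
    · exact exists_dist_le_of_forall_sfn_le hr
        (fun u hu => by linarith [(abs_sub_le_iff.1 (h u hu)).1]) hx
    · exact exists_dist_le_of_forall_sfn_le hr
        (fun u hu => by linarith [(abs_sub_le_iff.1 (h u hu)).2]) hx

theorem dist_le_iff_forall_mem_abs_sfn_sub_le {D : Set E} (hDs : D ⊆ sphere 0 1)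
    (hD : sphere 0 1 ⊆ closure D) {K L : ConvexBody E} {r : ℝ} (hr : 0 ≤ r) :
    dist K L ≤ r ↔ ∀ u ∈ D, |sfn K u - sfn L u| ≤ r := by
  rw [dist_le_iff_forall_abs_sfn_sub_le hr]
  refine ⟨fun h u hu => h u (mem_sphere_zero_iff_norm.1 (hDs hu)), fun h u hu => ?_⟩
  have hclosed : IsClosed {u : E | |sfn K u - sfn L u| ≤ r} :=
    isClosed_le ((continuous_sfn K).sub (continuous_sfn L)).abs continuous_const
  exact closure_minimal h hclosed (hD (mem_sphere_zero_iff_norm.2 hu))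

theorem measurable_dist_of_measurable_sfn {X : Type*} [MeasurableSpace X]
    {f : X → ConvexBody E} (hf : ∀ u : E, ‖u‖ = 1 → Measurable fun x => sfn (f x) u)
    (K : ConvexBody E) : Measurable fun x => dist (f x) K := by
  obtain ⟨D, hDs, hDc, hD⟩ :=
    (IsSeparable.of_separableSpace (sphere (0 : E) 1)).exists_countable_dense_subset
  refine measurable_of_Iic fun r => ?_
  rcases lt_or_ge r 0 with hr | hr
  · convert MeasurableSet.empty
    exact eq_empty_of_forall_notMem fun x (hx : dist (f x) K ≤ r) =>
      hr.not_ge (dist_nonneg.trans hx)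
  · have hpre : (fun x => dist (f x) K) ⁻¹' Iic r =
        ⋂ u ∈ D, {x | |sfn (f x) u - sfn K u| ≤ r} := by
      ext x
      simp only [mem_preimage, mem_Iic, mem_iInter, mem_ofPred_eq]
      exact dist_le_iff_forall_mem_abs_sfn_sub_le hDs hD hr
    rw [hpre]
    exact .biInter hDc fun u hu =>
      ((hf u (mem_sphere_zero_iff_norm.1 (hDs hu))).sub_const _).abs measurableSet_Iic

end SupportFunction

theorem measurable_of_superlevel_closed_general {n : ℕ} {X : Type*} [MetricSpace X]
    [MeasurableSpace X] [BorelSpace X]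
    [MeasurableSpace (ConvexBody (EuclideanSpace ℝ (Fin n)))]
    [BorelSpace (ConvexBody (EuclideanSpace ℝ (Fin n)))]
    (f : X → ConvexBody (EuclideanSpace ℝ (Fin n)))
    (h : ∀ u : EuclideanSpace ℝ (Fin n), ‖u‖ = 1 → ∀ lam : ℝ,
      IsClosed {x : X | lam ≤ sfn (f x) u}) :
    Measurable f :=
  measurable_of_measurable_dist <| measurable_dist_of_measurable_sfn fun u hu =>
    measurable_of_Ici fun lam => (h u hu lam).measurableSet

theorem measurable_of_superlevel_closed {n : ℕ} {X : Type*} [MetricSpace X]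
    [TopologicalSpace.SeparableSpace X] [MeasurableSpace X] [BorelSpace X]
    [MeasurableSpace (ConvexBody (EuclideanSpace ℝ (Fin n)))]
    [BorelSpace (ConvexBody (EuclideanSpace ℝ (Fin n)))]
    (f : X → ConvexBody (EuclideanSpace ℝ (Fin n)))
    (h : ∀ u : EuclideanSpace ℝ (Fin n), ‖u‖ = 1 → ∀ lam : ℝ,
      IsClosed {x : X | lam ≤ sfn (f x) u}) :
    Measurable f :=
  measurable_of_superlevel_closed_general f h
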